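/- (Nuclear norm of a Hadamard product of low-rank factorizations) Let L_A ∈ ℝ^{n₁×r₁}, R_A ∈ ℝ^{n₂×r₁}, L_B ∈ ℝ^{n₁×r₂}, R_B ∈ ℝ^{n₂×r₂}. Then the nuclear norm of the Hadamard (entrywise) product satisfies ‖(L_A R_Aᴴ) ∘ (L_B R_Bᴴ)‖_* ≤ √(Σ_i ‖L_A(i,:)‖₂²·‖L_B(i,:)‖₂²) · √(Σ_j ‖R_A(j,:)‖₂²·‖R_B(j,:)‖₂²). -/

import Mathlib

open Matrix BigOperators

/-- Nuclear norm: sum of singular values, i.e. ∑ √(λᵢ(MᵀM)). -/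
noncomputable def nuclearNorm {m n : Type*} [Fintype m] [Fintype n] [DecidableEq n]
    (M : Matrix m n ℝ) : ℝ :=
  ∑ i, Real.sqrt ((Matrix.isHermitian_conjTranspose_mul_self M).eigenvalues i)

/-!
Expanding the Hadamard product of `LA * RAᵀ` and `LB * RBᵀ` writes it as a sum of rank-one
matrices `uₜ vₜᵀ` indexed by pairs of columns, with `uₜ = LA(:,j) ∘ LB(:,j')` and
`vₜ = RA(:,j) ∘ RB(:,j')`. With singular triples `(σₖ, wₖ, zₖ)` of `M = ∑ₜ uₜ vₜᵀ` we have
`∑ₖ σₖ = ∑ₖ wₖᵀ M zₖ = ∑ₜ ∑ₖ (wₖ ⬝ uₜ) (vₜ ⬝ zₖ)`, and Cauchy–Schwarz in `k` followed by Bessel's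
inequality for the orthonormal families `w` and `z` bounds this by `∑ₜ ‖uₜ‖ ‖vₜ‖`. A final
Cauchy–Schwarz over `t = (j, j')` gives the product of the two square roots.
-/

theorem sum_sq_dotProduct_le_of_orthonormal {ι κ : Type*} [Fintype ι] {v : κ → ι → ℝ}
    (hv : Orthonormal ℝ fun k => WithLp.toLp 2 (v k)) (x : ι → ℝ) (s : Finset κ) :
    ∑ k ∈ s, (v k ⬝ᵥ x) ^ 2 ≤ ∑ i, x i ^ 2 := by
  simpa [EuclideanSpace.inner_toLp_toLp, EuclideanSpace.real_norm_sq_eq, dotProduct_comm]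
    using hv.sum_inner_products_le (WithLp.toLp 2 x) (s := s)

namespace Matrix

variable {m n : Type*} [Fintype m] [Fintype n] [DecidableEq n]

noncomputable def singularValue (M : Matrix m n ℝ) (k : n) : ℝ :=
  √((isHermitian_conjTranspose_mul_self M).eigenvalues k)

noncomputable def rightSingularVector (M : Matrix m n ℝ) (k : n) : n → ℝ :=
  (isHermitian_conjTranspose_mul_self M).eigenvectorBasis k

/-- Zero when `M.singularValue k = 0`, since `0⁻¹ = 0`. -/
noncomputable def leftSingularVector (M : Matrix m n ℝ) (k : n) : m → ℝ :=
  (M.singularValue k)⁻¹ • (M *ᵥ M.rightSingularVector k)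

variable (M : Matrix m n ℝ)

theorem nuclearNorm_eq_sum_singularValue : nuclearNorm M = ∑ k, M.singularValue k := rfl

theorem orthonormal_rightSingularVector :
    Orthonormal ℝ fun k => WithLp.toLp 2 (M.rightSingularVector k) := by
  simp only [rightSingularVector, WithLp.toLp_ofLp]
  exact (isHermitian_conjTranspose_mul_self M).eigenvectorBasis.orthonormal

theorem conjTranspose_mul_self_mulVec_rightSingularVector (k : n) :
    (Mᴴ * M) *ᵥ M.rightSingularVector k = M.singularValue k ^ 2 • M.rightSingularVector k := by
  rw [singularValue, Real.sq_sqrt (eigenvalues_conjTranspose_mul_self_nonneg M k)]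
  exact (isHermitian_conjTranspose_mul_self M).mulVec_eigenvectorBasis k

theorem mulVec_rightSingularVector_dotProduct (k l : n) :
    (M *ᵥ M.rightSingularVector k) ⬝ᵥ (M *ᵥ M.rightSingularVector l) =
      if k = l then M.singularValue l ^ 2 else 0 := by
  have hz := orthonormal_iff_ite.mp M.orthonormal_rightSingularVector k l
  rw [EuclideanSpace.inner_toLp_toLp, star_trivial, dotProduct_comm] at hz
  rw [dotProduct_mulVec, vecMul_mulVec, ← dotProduct_mulVec,
    ← conjTranspose_eq_transpose_of_trivial, conjTranspose_mul_self_mulVec_rightSingularVector,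
    dotProduct_smul, hz]
  split_ifs <;> simp

theorem leftSingularVector_dotProduct_mulVec (k : n) :
    M.leftSingularVector k ⬝ᵥ (M *ᵥ M.rightSingularVector k) = M.singularValue k := by
  rw [leftSingularVector, smul_dotProduct, mulVec_rightSingularVector_dotProduct, if_pos rfl,
    smul_eq_mul, ← div_eq_inv_mul, sq, mul_self_div_self]

theorem orthonormal_leftSingularVector :
    Orthonormal ℝ fun k : {k // M.singularValue k ≠ 0} =>
      WithLp.toLp 2 (M.leftSingularVector k) := by
  rw [orthonormal_iff_ite]
  rintro ⟨k, hk⟩ ⟨l, hl⟩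
  rw [EuclideanSpace.inner_toLp_toLp, star_trivial, leftSingularVector, leftSingularVector,
    dotProduct_smul, smul_dotProduct, mulVec_rightSingularVector_dotProduct]
  by_cases hkl : k = l
  · subst hkl
    simp only [if_true, smul_eq_mul]
    rw [← mul_assoc, ← sq, inv_pow, inv_mul_cancel₀ (pow_ne_zero 2 hk)]
  · simp [hkl, Ne.symm hkl]

theorem sum_sq_leftSingularVector_dotProduct_le (x : m → ℝ) :
    ∑ k, (M.leftSingularVector k ⬝ᵥ x) ^ 2 ≤ ∑ a, x a ^ 2 := by
  calc ∑ k, (M.leftSingularVector k ⬝ᵥ x) ^ 2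
      = ∑ k : {k // M.singularValue k ≠ 0}, (M.leftSingularVector k ⬝ᵥ x) ^ 2 := by
        rw [← Finset.sum_filter_of_ne (p := fun k => M.singularValue k ≠ 0) fun k _ hk => ?_,
          Finset.sum_subtype (p := fun k => M.singularValue k ≠ 0) _ fun k => by simp]
        contrapose! hk
        simp [leftSingularVector, hk]
    _ ≤ ∑ a, x a ^ 2 :=
        sum_sq_dotProduct_le_of_orthonormal M.orthonormal_leftSingularVector x _

end Matrix

theorem dotProduct_sum_vecMulVec_mulVec {m n ι : Type*} [Fintype m] [Fintype n] [Fintype ι]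
    (u : ι → m → ℝ) (v : ι → n → ℝ) (w : m → ℝ) (z : n → ℝ) :
    w ⬝ᵥ ((∑ t, vecMulVec (u t) (v t)) *ᵥ z) = ∑ t, (w ⬝ᵥ u t) * (v t ⬝ᵥ z) := by
  simp only [sum_mulVec, vecMulVec_mulVec, op_smul_eq_smul, dotProduct_sum, dotProduct_smul,
    smul_eq_mul, mul_comm]

theorem nuclearNorm_sum_vecMulVec_le {m n ι : Type*} [Fintype m] [Fintype n] [Fintype ι]
    [DecidableEq n] (u : ι → m → ℝ) (v : ι → n → ℝ) :
    nuclearNorm (∑ t, vecMulVec (u t) (v t)) ≤ ∑ t, √(∑ a, u t a ^ 2) * √(∑ b, v t b ^ 2) := by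
  set M := ∑ t, vecMulVec (u t) (v t)
  have hw t : ∑ k, (M.leftSingularVector k ⬝ᵥ u t) ^ 2 ≤ ∑ a, u t a ^ 2 :=
    M.sum_sq_leftSingularVector_dotProduct_le (u t)
  have hz t : ∑ k, (v t ⬝ᵥ M.rightSingularVector k) ^ 2 ≤ ∑ b, v t b ^ 2 := by
    simpa only [dotProduct_comm (v t)] using
      sum_sq_dotProduct_le_of_orthonormal M.orthonormal_rightSingularVector (v t) Finset.univ
  calc nuclearNorm M
      = ∑ k, M.leftSingularVector k ⬝ᵥ (M *ᵥ M.rightSingularVector k) := by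
        simp only [M.leftSingularVector_dotProduct_mulVec, M.nuclearNorm_eq_sum_singularValue]
    _ = ∑ t, ∑ k, (M.leftSingularVector k ⬝ᵥ u t) * (v t ⬝ᵥ M.rightSingularVector k) := by
        simp only [M, dotProduct_sum_vecMulVec_mulVec]
        exact Finset.sum_comm
    _ ≤ ∑ t, √(∑ k, (M.leftSingularVector k ⬝ᵥ u t) ^ 2) *
          √(∑ k, (v t ⬝ᵥ M.rightSingularVector k) ^ 2) :=
        Finset.sum_le_sum fun t _ => Real.sum_mul_le_sqrt_mul_sqrt _ _ _
    _ ≤ ∑ t, √(∑ a, u t a ^ 2) * √(∑ b, v t b ^ 2) := by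
        gcongr ∑ t, √?_ * √?_ with t
        exacts [hw t, hz t]

theorem hadamard_mul_transpose_eq_sum_vecMulVec {n₁ n₂ r₁ r₂ R : Type*} [Fintype r₁] [Fintype r₂]
    [CommSemiring R] (LA : Matrix n₁ r₁ R) (RA : Matrix n₂ r₁ R) (LB : Matrix n₁ r₂ R)
    (RB : Matrix n₂ r₂ R) :
    (LA * RAᵀ) ⊙ (LB * RBᵀ) =
      ∑ t : r₁ × r₂, vecMulVec (fun i => LA i t.1 * LB i t.2) (fun j => RA j t.1 * RB j t.2) := by
  ext i j
  simp only [hadamard_apply, mul_apply, transpose_apply, Matrix.sum_apply, vecMulVec_apply,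
    Fintype.sum_prod_type, Finset.sum_mul_sum]
  exact Finset.sum_congr rfl fun _ _ => Finset.sum_congr rfl fun _ _ => by ring

theorem sum_prod_type_sum_mul_sq {ι α β R : Type*} [Fintype ι] [Fintype α] [Fintype β]
    [CommSemiring R] (A : Matrix ι α R) (B : Matrix ι β R) :
    ∑ t : α × β, ∑ i, (A i t.1 * B i t.2) ^ 2 = ∑ i, (∑ j, A i j ^ 2) * ∑ j, B i j ^ 2 := by
  rw [Finset.sum_comm]
  refine Finset.sum_congr rfl fun i _ => ?_
  simp only [Finset.sum_mul_sum, Fintype.sum_prod_type, mul_pow]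

theorem stmt_12 {n₁ n₂ r₁ r₂ : Type*} [Fintype n₁] [Fintype n₂] [Fintype r₁] [Fintype r₂]
    [DecidableEq n₂]
    (LA : Matrix n₁ r₁ ℝ) (RA : Matrix n₂ r₁ ℝ) (LB : Matrix n₁ r₂ ℝ) (RB : Matrix n₂ r₂ ℝ) :
    nuclearNorm (Matrix.hadamard (LA * RAᵀ) (LB * RBᵀ)) ≤
      Real.sqrt (∑ i, (∑ j, LA i j ^ 2) * (∑ j, LB i j ^ 2)) *
      Real.sqrt (∑ i, (∑ j, RA i j ^ 2) * (∑ j, RB i j ^ 2)) := by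
  rw [hadamard_mul_transpose_eq_sum_vecMulVec, ← sum_prod_type_sum_mul_sq LA LB,
    ← sum_prod_type_sum_mul_sq RA RB]
  exact (nuclearNorm_sum_vecMulVec_le _ _).trans
    (Real.sum_sqrt_mul_sqrt_le _ (fun _ => by positivity) fun _ => by positivity)
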